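/- (Type-I error control of the one-sided plausibility test.) Fix θ₀ > 0 and let A = (θ₀, ∞). For any θ > θ₀ (i.e., θ ∈ A), if X is Poisson(θ)-distributed, then for every α ∈ (0,1), P{ F_{θ₀}(X) ≤ α } ≤ α, where F_{θ₀}(x) = ∑_{k=0}^{x} e^{-θ₀} θ₀^k / k!. Hence the rule that rejects H₀: θ ∈ A when the plausibility pl_x(A) = F_{θ₀}(x) is at most α has frequentist Type-I error at most α. -/

import Mathlib

/-- The Poisson(θ) probability mass function. -/
noncomputable def poisPMF (θ : ℝ) (x : ℕ) : ℝ := Real.exp (-θ) * θ ^ x / Nat.factorial x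

/-- The Poisson(θ) distribution function F_θ(x) = ∑_{k=0}^{x} e^{-θ} θ^k / k!. -/
noncomputable def poisCDF (θ : ℝ) (x : ℕ) : ℝ := ∑ k ∈ Finset.range (x + 1), poisPMF θ k

/-!
Since `∂/∂θ F_θ(n) = -f_θ(n) ≤ 0`, the Poisson distribution function decreases in `θ`.
A finite set of outcomes `x` with `F_{θ₀}(x) ≤ α` and largest element `m` therefore has
`f_θ`-mass at most `F_θ(m) ≤ F_{θ₀}(m) ≤ α`.
-/

open Finset

lemma tsum_subtype_le_of_sum_range_succ_le {f G : ℕ → ℝ} (hf : ∀ n, 0 ≤ f n)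
    (hG : ∀ n, ∑ k ∈ range (n + 1), f k ≤ G n) {α : ℝ} (hα : 0 ≤ α) :
    ∑' x : {x : ℕ // G x ≤ α}, f x ≤ α := by
  refine tsum_le_of_sum_le' hα fun s => ?_
  rcases s.eq_empty_or_nonempty with rfl | hs
  · simpa using hα
  obtain ⟨⟨m, hm⟩, -, hmax⟩ := s.exists_max_image Subtype.val hs
  set e := Function.Embedding.subtype fun x => G x ≤ α
  have hsub : s.map e ⊆ range (m + 1) := by
    intro k hk
    obtain ⟨x, hx, rfl⟩ := mem_map.mp hk
    exact mem_range_succ_iff.mpr (hmax x hx)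
  calc ∑ x ∈ s, f x = ∑ k ∈ s.map e, f k := by rw [sum_map]; rfl
    _ ≤ ∑ k ∈ range (m + 1), f k := sum_le_sum_of_subset_of_nonneg hsub fun k _ _ => hf k
    _ ≤ G m := hG m
    _ ≤ α := hm

lemma poisPMF_nonneg {θ : ℝ} (hθ : 0 ≤ θ) (n : ℕ) : 0 ≤ poisPMF θ n := by
  unfold poisPMF
  positivity

lemma hasDerivAt_poisPMF_zero (t : ℝ) :
    HasDerivAt (fun s => poisPMF s 0) (-poisPMF t 0) t := by
  simpa [poisPMF] using (hasDerivAt_neg t).exp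

lemma hasDerivAt_poisPMF_succ (n : ℕ) (t : ℝ) :
    HasDerivAt (fun s => poisPMF s (n + 1)) (poisPMF t n - poisPMF t (n + 1)) t := by
  have h := (((hasDerivAt_neg t).exp).mul (hasDerivAt_pow (n + 1) t)).div_const
    ((n + 1).factorial : ℝ)
  refine h.congr_deriv ?_
  simp only [poisPMF, Nat.factorial_succ, Nat.cast_mul, Nat.cast_succ, Nat.add_sub_cancel]
  field_simp
  ring

lemma hasDerivAt_poisCDF (n : ℕ) (t : ℝ) :
    HasDerivAt (fun s => poisCDF s n) (-poisPMF t n) t := by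
  induction n with
  | zero => simpa [poisCDF] using hasDerivAt_poisPMF_zero t
  | succ n ih =>
    simp only [poisCDF, sum_range_succ _ (n + 1)] at ih ⊢
    exact (ih.add (hasDerivAt_poisPMF_succ n t)).congr_deriv (by ring)

lemma poisCDF_antitoneOn (n : ℕ) : AntitoneOn (fun θ => poisCDF θ n) (Set.Ici 0) := by
  have hderiv := hasDerivAt_poisCDF n
  refine antitoneOn_of_hasDerivWithinAt_nonpos (convex_Ici 0)
    (fun t _ => (hderiv t).continuousAt.continuousWithinAt)
    (fun t _ => (hderiv t).hasDerivWithinAt) fun t ht => ?_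
  rw [interior_Ici] at ht
  exact neg_nonpos.mpr (poisPMF_nonneg ht.le n)

/-- Type-I error control of the one-sided plausibility test: Fix θ₀ > 0
and let A = (θ₀, ∞). For any θ > θ₀ (i.e., θ ∈ A), if X is Poisson(θ)-distributed, then
for every α ∈ (0,1), P{ F_{θ₀}(X) ≤ α } ≤ α. Hence the rule that rejects H₀: θ ∈ A when
the plausibility pl_x(A) = F_{θ₀}(x) is at most α has frequentist Type-I error at most α. -/
theorem one_sided_plausibility_test_type_I_error (θ₀ : ℝ) (hθ₀ : 0 < θ₀)
    (θ : ℝ) (hθ : θ₀ < θ) (α : ℝ) (hα : α ∈ Set.Ioo (0:ℝ) 1) :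
    ∑' x : {x : ℕ // poisCDF θ₀ x ≤ α}, poisPMF θ x ≤ α :=
  tsum_subtype_le_of_sum_range_succ_le (poisPMF_nonneg (hθ₀.trans hθ).le)
    (fun n => poisCDF_antitoneOn n (Set.mem_Ici.mpr hθ₀.le)
      (Set.mem_Ici.mpr (hθ₀.trans hθ).le) hθ.le) hα.1.le
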